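/- arXiv:1307.0446 — 2 statements merged into one kernel-verified Lean document; each statement's English description precedes it below -/
import Mathlib

section
/- For a Gray–Hervella tensor A on the 4-dimensional Hermitian vector space (V, ⟨·,·⟩, J), the following two conditions are equivalent: (1) A(X,Y,Z) + A(JX,JY,Z) = 0 for all X, Y, Z ∈ V; (2) A(X,Y,Z) + A(Y,Z,X) + A(Z,X,Y) = 0 for all X, Y, Z ∈ V. (In real dimension 4, the quasi-Kähler condition on ∇F is equivalent to dF = 0.) -/
/-!
Write `C` for the cyclic sum of `A`. If `A(X,Y,Z) + A(JX,JY,Z) = 0`, then `C` is an alternating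
3-form with `C(JX,JY,Z) = -C(X,Y,Z)`, hence `C(X,JX,Z) = 0`. In real dimension 4 this kills `C`:
either `Y` lies in the complex line spanned by `X` and `JX`, or `X, JX, Y, JY` is a basis, on which
`C(X,Y,·)` vanishes.

Conversely, if `C = 0`, then `B(X,Y,Z) = A(X,Y,Z) + A(JX,JY,Z)` changes sign under a cyclic
rotation of its arguments; a rotation has order 3, so `B = 0`.
-/

open scoped RealInnerProductSpace

open Submodule

section CyclicSum

variable {R M N : Type*} [CommSemiring R] [AddCommMonoid M] [Module R M]

def cyclicSum [AddCommMonoid N] [Module R N] (A : M →ₗ[R] M →ₗ[R] M →ₗ[R] N) :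
    M →ₗ[R] M →ₗ[R] M →ₗ[R] N :=
  A + (LinearMap.lflip.toLinearMap ∘ₗ A).flip +
    (LinearMap.lflip.toLinearMap ∘ₗ (LinearMap.lflip.toLinearMap ∘ₗ A).flip).flip

@[simp]
theorem cyclicSum_apply [AddCommMonoid N] [Module R N] (A : M →ₗ[R] M →ₗ[R] M →ₗ[R] N)
    (x y z : M) : cyclicSum A x y z = A x y z + A y z x + A z x y :=
  rfl

theorem cyclicSum_apply_rotate [AddCommMonoid N] [Module R N]
    (A : M →ₗ[R] M →ₗ[R] M →ₗ[R] N) (x y z : M) :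
    cyclicSum A y z x = cyclicSum A x y z := by
  simp only [cyclicSum_apply]
  abel

theorem cyclicSum_apply_swap [AddCommGroup N] [Module R N] {A : M →ₗ[R] M →ₗ[R] M →ₗ[R] N}
    (hA : ∀ x y z, A x y z = -A x z y) (x y z : M) :
    cyclicSum A x z y = -cyclicSum A x y z := by
  simp only [cyclicSum_apply, hA x z y, hA z y x, hA y x z]
  abel

end CyclicSum

section ComplexStructure

variable {V : Type*} [AddCommGroup V] [Module ℝ V] {J : V →ₗ[ℝ] V}

theorem eq_zero_of_smul_add_smul_apply_mem (hJ : ∀ v, J (J v) = -v) {W : Submodule ℝ V}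
    (hW : ∀ w ∈ W, J w ∈ W) {v : V} (hv : v ∉ W) {a b : ℝ} (h : a • v + b • J v ∈ W) :
    a = 0 ∧ b = 0 := by
  have hJh : a • J v - b • v ∈ W := by
    simpa [hJ, sub_eq_add_neg] using hW _ h
  have hsq : (a ^ 2 + b ^ 2) • v ∈ W := by
    convert W.sub_mem (W.smul_mem a h) (W.smul_mem b hJh) using 1
    module
  have hzero : a ^ 2 + b ^ 2 = 0 := by
    by_contra hne
    exact hv ((W.smul_mem_iff hne).mp hsq)
  constructor <;> nlinarith [sq_nonneg a, sq_nonneg b]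

theorem linearIndependent_of_notMem_span_pair (hJ : ∀ v, J (J v) = -v) {x y : V} (hx : x ≠ 0)
    (hy : y ∉ span ℝ {x, J x}) : LinearIndependent ℝ ![x, J x, y, J y] := by
  have hspan : ∀ w ∈ span ℝ {x, J x}, J w ∈ span ℝ {x, J x} := by
    intro w hw
    obtain ⟨a, b, rfl⟩ := mem_span_pair.mp hw
    exact mem_span_pair.mpr ⟨-b, a, by simp [hJ, add_comm]⟩
  have hbot : ∀ w ∈ (⊥ : Submodule ℝ V), J w ∈ (⊥ : Submodule ℝ V) := by simp
  rw [Fintype.linearIndependent_iff]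
  intro g hg
  simp only [Fin.sum_univ_four, Matrix.cons_val] at hg
  obtain ⟨h2, h3⟩ : g 2 = 0 ∧ g 3 = 0 := by
    refine eq_zero_of_smul_add_smul_apply_mem hJ hspan hy (mem_span_pair.mpr ⟨-g 0, -g 1, ?_⟩)
    linear_combination (norm := module) -hg
  obtain ⟨h0, h1⟩ : g 0 = 0 ∧ g 1 = 0 := by
    refine eq_zero_of_smul_add_smul_apply_mem hJ hbot (by simpa using hx) ?_
    simpa [h2, h3] using hg
  intro i
  fin_cases i <;> assumption

theorem trilinear_eq_zero_of_apply_J_J (hJ : ∀ v, J (J v) = -v) (h4 : Module.finrank ℝ V = 4)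
    {T : V →ₗ[ℝ] V →ₗ[ℝ] V →ₗ[ℝ] ℝ} (h12 : ∀ x y z, T y x z = -T x y z)
    (h23 : ∀ x y z, T x z y = -T x y z) (hTJ : ∀ x y z, T (J x) (J y) z = -T x y z)
    (x y z : V) : T x y z = 0 := by
  have hdiag12 : ∀ x z, T x x z = 0 := fun x z ↦ by linarith [h12 x x z]
  have hdiag23 : ∀ x y, T x y y = 0 := fun x y ↦ by linarith [h23 x y y]
  have hdiag13 : ∀ x y, T x y x = 0 := fun x y ↦ by rw [h23, hdiag12, neg_zero]
  have hselfJ : ∀ x z, T x (J x) z = 0 := by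
    intro x z
    have := hTJ x (J x) z
    rw [hJ, map_neg, LinearMap.neg_apply, h12] at this
    linarith
  rcases eq_or_ne x 0 with rfl | hx
  · simp
  by_cases hy : y ∈ span ℝ {x, J x}
  · obtain ⟨a, b, rfl⟩ := mem_span_pair.mp hy
    simp [hdiag12, hselfJ]
  have hTxy : T x y = 0 := by
    refine LinearMap.ext_on_range ((linearIndependent_of_notMem_span_pair hJ hx hy)
      |>.span_eq_top_of_card_eq_finrank (by simp [h4])) fun i ↦ ?_
    fin_cases i
    · exact hdiag13 x y
    · change T x y (J x) = 0
      rw [h23, hselfJ, neg_zero]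
    · exact hdiag23 x y
    · change T x y (J y) = 0
      rw [h12, h23, hselfJ, neg_zero, neg_zero]
  simp [hTxy]

end ComplexStructure

section GrayHervella

variable {V : Type*} [AddCommGroup V] [Module ℝ V] {J : V →ₗ[ℝ] V}
  {A : V →ₗ[ℝ] V →ₗ[ℝ] V →ₗ[ℝ] ℝ}

theorem add_apply_J_J_eq_zero_of_cyclicSum (hJ : ∀ v, J (J v) = -v)
    (hA : ∀ x y z, A x y z = -A x (J y) (J z)) (hcyc : ∀ x y z, A x y z + A y z x + A z x y = 0)
    (x y z : V) : A x y z + A (J x) (J y) z = 0 := by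
  set B : V → V → V → ℝ := fun x y z ↦ A x y z + A (J x) (J y) z
  -- the cyclic identity at `(J x, y, J z)`, rewritten through `hA`, minus the one at `(x, y, z)`
  have hrot : ∀ x y z, B x y z = -B z x y := by
    intro x y z
    have hmoveJ : A (J x) y (J z) = A (J x) (J y) z := by
      rw [hA (J x) y (J z), hJ, map_neg, neg_neg]
    linarith [hcyc (J x) y (J z), hcyc x y z, hA y z x]
  linarith [hrot x y z, hrot z x y, hrot y z x]

theorem cyclicSum_apply_J_J (hJ : ∀ v, J (J v) = -v) (hA : ∀ x y z, A x y z = -A x (J y) (J z))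
    (hJJ : ∀ x y z, A x y z + A (J x) (J y) z = 0) (x y z : V) :
    cyclicSum A (J x) (J y) z = -cyclicSum A x y z := by
  have hJyzJx : A (J y) z (J x) = -A y z x := by
    rw [hA (J y) z (J x), hJ, map_neg, neg_neg]
    linarith [hJJ y z x]
  simp only [cyclicSum_apply, hJyzJx]
  linarith [hJJ x y z, hA z x y]

end GrayHervella

theorem stmt_18_general {V : Type*} [NormedAddCommGroup V] [InnerProductSpace ℝ V]
    (h4 : Module.finrank ℝ V = 4)
    (J : V →ₗ[ℝ] V)
    (hJ2 : J ∘ₗ J = -LinearMap.id)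
    (A : V →ₗ[ℝ] V →ₗ[ℝ] V →ₗ[ℝ] ℝ)
    (hA1 : ∀ X Y Z : V, A X Y Z = -A X Z Y)
    (hA2 : ∀ X Y Z : V, A X Y Z = -A X (J Y) (J Z)) :
    (∀ X Y Z : V, A X Y Z + A (J X) (J Y) Z = 0) ↔
    (∀ X Y Z : V, A X Y Z + A Y Z X + A Z X Y = 0) := by
  have hJ : ∀ v, J (J v) = -v := fun v ↦ by simpa using LinearMap.congr_fun hJ2 v
  refine ⟨fun hJJ X Y Z ↦ ?_, add_apply_J_J_eq_zero_of_cyclicSum hJ hA2⟩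
  have h23 := cyclicSum_apply_swap hA1
  have h12 : ∀ x y z, cyclicSum A y x z = -cyclicSum A x y z := fun x y z ↦ by
    rw [← cyclicSum_apply_rotate, h23]
  simpa using trilinear_eq_zero_of_apply_J_J hJ h4 h12 h23 (cyclicSum_apply_J_J hJ hA2 hJJ) X Y Z

/-- Let `(V, ⟨·,·⟩, J)` be a 4-dimensional Hermitian vector space (`J∘J = −Id`
and `⟨JX,JY⟩ = ⟨X,Y⟩`).  For every Gray–Hervella tensor `A` on `V` (trilinear, with
`A(X,Y,Z) = −A(X,Z,Y)` and `A(X,Y,Z) = −A(X,JY,JZ)`), the following are equivalent: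
(1) `A(X,Y,Z) + A(JX,JY,Z) = 0` for all `X,Y,Z`;
(2) `A(X,Y,Z) + A(Y,Z,X) + A(Z,X,Y) = 0` for all `X,Y,Z`.
(In real dimension 4, the quasi-Kähler condition on `∇F` is equivalent to `dF = 0`.) -/
theorem stmt_18 {V : Type*} [NormedAddCommGroup V] [InnerProductSpace ℝ V]
    (h4 : Module.finrank ℝ V = 4)
    (J : V →ₗ[ℝ] V)
    (hJ2 : J ∘ₗ J = -LinearMap.id)
    (hJinner : ∀ X Y : V, ⟪J X, J Y⟫ = ⟪X, Y⟫)
    (A : V →ₗ[ℝ] V →ₗ[ℝ] V →ₗ[ℝ] ℝ)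
    (hA1 : ∀ X Y Z : V, A X Y Z = -A X Z Y)
    (hA2 : ∀ X Y Z : V, A X Y Z = -A X (J Y) (J Z)) :
    (∀ X Y Z : V, A X Y Z + A (J X) (J Y) Z = 0) ↔
    (∀ X Y Z : V, A X Y Z + A Y Z X + A Z X Y = 0) :=
  stmt_18_general h4 J hJ2 A hA1 hA2
end

section
/- Let σ ∈ E be a unit vector and φ : E → ℝ a linear functional. Then for all U, V, W ∈ E orthogonal to σ one has ⟨U,V⟩·φ(σ×W) − ⟨U,W⟩·φ(σ×V) + ⟨U, σ×V⟩·φ(W) − ⟨U, σ×W⟩·φ(V) = 0 (identity (v) in the proof of Lemma 2 of the paper). -/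
open scoped RealInnerProductSpace Matrix

/-!
Put `N = W × V`. By the BAC–CAB rule the vector to which `φ` is applied on the left-hand side is
`(U × σ) × N + σ × (U × N)`, which by the Leibniz rule for `×` is `U × (σ × N)`; and
`σ × N = ⟪σ, V⟫ W - ⟪σ, W⟫ V = 0`. The two rules hold for `×` because a positively oriented
orthonormal basis carries it to the coordinate cross product on `ℝ³`.
-/

theorem LinearIsometryEquiv.real_inner_eq_dotProduct {ι F : Type*} [Fintype ι]
    [NormedAddCommGroup F] [InnerProductSpace ℝ F] (e : F ≃ₗᵢ[ℝ] EuclideanSpace ℝ ι) (x y : F) :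
    ⟪x, y⟫ = (e x).ofLp ⬝ᵥ (e y).ofLp := by
  rw [← e.inner_map_map, EuclideanSpace.inner_eq_star_dotProduct, star_trivial, dotProduct_comm]

section

variable {E : Type*} [NormedAddCommGroup E] [InnerProductSpace ℝ E]
  [Fact (Module.finrank ℝ E = 3)]

def IsCrossProduct (o : Orientation ℝ E (Fin 3)) (cross : E →ₗ[ℝ] E →ₗ[ℝ] E) : Prop :=
  ∀ x y z : E, ⟪cross x y, z⟫ = o.volumeForm ![x, y, z]

namespace IsCrossProduct

variable {o : Orientation ℝ E (Fin 3)} {cross : E →ₗ[ℝ] E →ₗ[ℝ] E}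

theorem ofLp_repr_cross (h : IsCrossProduct o cross) (b : OrthonormalBasis (Fin 3) ℝ E)
    (hb : b.toBasis.orientation = o) (x y : E) :
    (b.repr (cross x y)).ofLp = (b.repr x).ofLp ⨯₃ (b.repr y).ofLp := by
  ext i
  rw [b.repr_apply_apply, real_inner_comm, h, o.volumeForm_robust b hb,
    Module.Basis.det_apply, Matrix.det_fin_three]
  fin_cases i <;>
  · simp only [Fin.zero_eta, Fin.mk_one, Fin.reduceFinMk, Fin.isValue, Fin.reduceEq,
      Module.Basis.toMatrix_apply, OrthonormalBasis.coe_toBasis_repr_apply, b.repr_apply_apply,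
      OrthonormalBasis.repr_self, PiLp.single_eq_same, PiLp.single_eq_of_ne, Matrix.cons_val_zero,
      Matrix.cons_val_one, Matrix.cons_val, cross_apply, ne_eq, not_false_eq_true, one_ne_zero,
      zero_ne_one, mul_zero, zero_mul, mul_one, one_mul, sub_self, sub_zero, zero_sub, add_zero,
      zero_add, sub_right_inj]
    ring

theorem exists_linearIsometryEquiv_map_cross (h : IsCrossProduct o cross) :
    ∃ e : E ≃ₗᵢ[ℝ] EuclideanSpace ℝ (Fin 3),
      ∀ x y, (e (cross x y)).ofLp = (e x).ofLp ⨯₃ (e y).ofLp :=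
  ⟨_, h.ofLp_repr_cross _ (o.finOrthonormalBasis_orientation (by norm_num) Fact.out)⟩

variable (h : IsCrossProduct o cross)
include h

theorem cross_cross (x y z : E) : cross x (cross y z) = ⟪x, z⟫ • y - ⟪y, x⟫ • z := by
  obtain ⟨e, he⟩ := h.exists_linearIsometryEquiv_map_cross
  apply e.injective
  apply WithLp.ofLp_injective
  simp only [he, map_sub, map_smul, WithLp.ofLp_sub, WithLp.ofLp_smul, e.real_inner_eq_dotProduct,
    cross_cross_eq_smul_sub_smul']

theorem leibniz_cross (x y z : E) :
    cross x (cross y z) = cross (cross x y) z + cross y (cross x z) := by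
  obtain ⟨e, he⟩ := h.exists_linearIsometryEquiv_map_cross
  apply e.injective
  apply WithLp.ofLp_injective
  simp only [he, map_add, WithLp.ofLp_add]
  exact _root_.leibniz_cross (R := ℝ) _ _ _

theorem inner_cross_left (x y z : E) : ⟪x, cross y z⟫ = ⟪cross x y, z⟫ := by
  obtain ⟨e, he⟩ := h.exists_linearIsometryEquiv_map_cross
  simp only [e.real_inner_eq_dotProduct, he]
  rw [triple_product_permutation, triple_product_permutation, dotProduct_comm]

theorem smul_cross_sub_smul_cross_add_smul_sub_smul_eq_zero {σ V W : E} (hV : ⟪V, σ⟫ = 0)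
    (hW : ⟪W, σ⟫ = 0) (U : E) :
    ⟪U, V⟫ • cross σ W - ⟪U, W⟫ • cross σ V + ⟪U, cross σ V⟫ • W - ⟪U, cross σ W⟫ • V = 0 := by
  have hσWV : cross σ (cross W V) = 0 := by
    rw [h.cross_cross, real_inner_comm, hV, hW, zero_smul, zero_smul, sub_zero]
  calc _ = cross (cross U σ) (cross W V) + cross σ (cross U (cross W V)) := by
        rw [h.cross_cross (cross U σ), h.cross_cross U, map_sub, map_smul, map_smul,
          ← h.inner_cross_left, real_inner_comm (cross U σ), ← h.inner_cross_left,
          real_inner_comm U W]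
        module
    _ = cross U (cross σ (cross W V)) := (h.leibniz_cross ..).symm
    _ = 0 := by rw [hσWV, map_zero]

end IsCrossProduct

end

theorem stmt_19_general {E : Type*} [NormedAddCommGroup E] [InnerProductSpace ℝ E]
    [Fact (Module.finrank ℝ E = 3)]
    (o : Orientation ℝ E (Fin 3))
    (cross : E →ₗ[ℝ] E →ₗ[ℝ] E)
    (hcross : ∀ x y z : E, ⟪cross x y, z⟫ = o.volumeForm ![x, y, z])
    (σ : E)
    (φ : E →ₗ[ℝ] ℝ) :
    ∀ U V W : E, ⟪U, σ⟫ = 0 → ⟪V, σ⟫ = 0 → ⟪W, σ⟫ = 0 →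
      ⟪U, V⟫ * φ (cross σ W) - ⟪U, W⟫ * φ (cross σ V)
        + ⟪U, cross σ V⟫ * φ W - ⟪U, cross σ W⟫ * φ V = 0 := by
  intro U V W _ hV hW
  have key := congrArg φ
    (IsCrossProduct.smul_cross_sub_smul_cross_add_smul_sub_smul_eq_zero hcross hV hW U)
  simpa only [map_add, map_sub, map_smul, smul_eq_mul, map_zero] using key

/-- Let `E` be a 3-dimensional oriented real inner product space with the
cross product `×` determined by the metric and orientation (characterized by
`⟨x×y, z⟩ = vol(x,y,z)`).  Let `σ ∈ E` be a unit vector and `φ : E → ℝ` a linear functional.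
Then for all `U, V, W ∈ E` orthogonal to `σ` one has
`⟨U,V⟩·φ(σ×W) − ⟨U,W⟩·φ(σ×V) + ⟨U, σ×V⟩·φ(W) − ⟨U, σ×W⟩·φ(V) = 0`. -/
theorem stmt_19 {E : Type*} [NormedAddCommGroup E] [InnerProductSpace ℝ E]
    [Fact (Module.finrank ℝ E = 3)]
    (o : Orientation ℝ E (Fin 3))
    (cross : E →ₗ[ℝ] E →ₗ[ℝ] E)
    (hcross : ∀ x y z : E, ⟪cross x y, z⟫ = o.volumeForm ![x, y, z])
    (σ : E) (hσ : ‖σ‖ = 1)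
    (φ : E →ₗ[ℝ] ℝ) :
    ∀ U V W : E, ⟪U, σ⟫ = 0 → ⟪V, σ⟫ = 0 → ⟪W, σ⟫ = 0 →
      ⟪U, V⟫ * φ (cross σ W) - ⟪U, W⟫ * φ (cross σ V)
        + ⟪U, cross σ V⟫ * φ W - ⟪U, cross σ W⟫ * φ V = 0 :=
  stmt_19_general o cross hcross σ φ
end
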